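/- (Absorbing-set estimate from the proof of Lemma A.1) Let j > 0 and let m be an IVP solution with parameter j defined on all of [0, ℓ]. If y ∈ [0, ℓ] is such that m(y) ≤ −1, then m(x) ≤ −1 − 2j(x − y) for every x ∈ [y, ℓ]. -/

import Mathlib

open Real Set

/-- The force profile `g(x) = ∫_{x-1}^x 1_{y ≤ ℓ/2} dy − ∫_x^{x+1} 1_{y ≤ ℓ/2} dy`. -/
noncomputable def gfun (ℓ : ℝ) (x : ℝ) : ℝ :=
  (∫ y in (x - 1)..x, if y ≤ ℓ / 2 then (1 : ℝ) else 0) -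
  (∫ y in x..(x + 1), if y ≤ ℓ / 2 then (1 : ℝ) else 0)

/-- An IVP solution with parameter `j`: a differentiable `m` on `[0, ℓ]` with `m 0 = 0`
and `m'(x) = -2j + βλ(1 - m(x)²) g(x)` on `[0, ℓ]`. -/
def IsIVPSolution (β lam ℓ j : ℝ) (m : ℝ → ℝ) : Prop :=
  m 0 = 0 ∧ ∀ x ∈ Icc (0 : ℝ) ℓ,
    HasDerivAt m (-2 * j + β * lam * (1 - m x ^ 2) * gfun ℓ x) x

/-- A stationary solution: an IVP solution which also satisfies `m ℓ = 0`. -/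
def IsStationarySolution (β lam ℓ j : ℝ) (m : ℝ → ℝ) : Prop :=
  IsIVPSolution β lam ℓ j m ∧ m ℓ = 0

/-!
The region `m ≤ -1` is absorbing because there `1 - m²` and hence the force term
`βλ(1 - m²)g` is nonpositive, so `m` decreases at least at rate `2j`. The touching
argument at the barrier `-1 - 2j(x - y)` is made strict by adding `ε e^{K(x - y)}`
with `K > 2βλ`: just above `-1` the force term is at most `2βλ(1 + m)`, which the
exponential outgrows. Letting `ε → 0` gives the claim.
-/

lemma intervalIntegrable_ite_le (c a b : ℝ) :
    IntervalIntegrable (fun y => if y ≤ c then (1 : ℝ) else 0) MeasureTheory.volume a b := by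
  have h : (fun y => if y ≤ c then (1 : ℝ) else 0) = (Iic c).indicator (fun _ => 1) := by
    ext t
    simp [indicator_apply]
  rw [h, intervalIntegrable_iff]
  exact (MeasureTheory.integrableOn_const measure_Ioc_lt_top.ne).indicator measurableSet_Iic

lemma gfun_nonneg (ℓ x : ℝ) : 0 ≤ gfun ℓ x := by
  have hshift : (∫ y in x..(x + 1), if y ≤ ℓ / 2 then (1 : ℝ) else 0)
      = ∫ y in (x - 1)..x, if y + 1 ≤ ℓ / 2 then (1 : ℝ) else 0 := by
    rw [intervalIntegral.integral_comp_add_right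
      (fun y => if y ≤ ℓ / 2 then (1 : ℝ) else 0) 1]
    norm_num
  rw [gfun, hshift, sub_nonneg]
  refine intervalIntegral.integral_mono_on (by linarith) ?_
    (intervalIntegrable_ite_le _ _ _) fun t _ => ?_
  · simpa using (intervalIntegrable_ite_le (ℓ / 2) x (x + 1)).comp_add_right 1
  · split_ifs <;> linarith

lemma gfun_le_one (ℓ x : ℝ) : gfun ℓ x ≤ 1 := by
  have hleft : (∫ y in (x - 1)..x, if y ≤ ℓ / 2 then (1 : ℝ) else 0) ≤ 1 := by
    have := intervalIntegral.integral_mono_on (by linarith)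
      (intervalIntegrable_ite_le (ℓ / 2) (x - 1) x) intervalIntegrable_const
      fun t _ => (by split_ifs <;> norm_num : (if t ≤ ℓ / 2 then (1 : ℝ) else 0) ≤ 1)
    simpa using this
  have hright : 0 ≤ ∫ y in x..(x + 1), if y ≤ ℓ / 2 then (1 : ℝ) else 0 :=
    intervalIntegral.integral_nonneg (by linarith) fun t _ => by split_ifs <;> norm_num
  rw [gfun]
  linarith

lemma mul_one_sub_sq_lt {c C u δ : ℝ} (hc₀ : 0 ≤ c) (hcC : c ≤ C) (hδ : 0 < δ)
    (hu : 1 + u ≤ δ) : c * (1 - u ^ 2) < (2 * C + 1) * δ := by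
  rcases le_or_gt u (-1) with hu₁ | hu₁
  · have : c * (1 - u ^ 2) ≤ 0 := mul_nonpos_of_nonneg_of_nonpos hc₀ (by nlinarith)
    nlinarith
  · have hsq : 1 - u ^ 2 ≤ 2 * δ := by nlinarith
    nlinarith

section Riccati

variable {m c : ℝ → ℝ} {a b j C : ℝ}

lemma le_neg_one_sub_add_exp_of_riccati (hj : 0 ≤ j) (hc : ∀ t ∈ Ico a b, c t ∈ Icc 0 C)
    (hm : ContinuousOn m (Icc a b))
    (hm' : ∀ t ∈ Ico a b, HasDerivWithinAt m (-2 * j + c t * (1 - m t ^ 2)) (Ici t) t)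
    (ha : m a ≤ -1) {ε : ℝ} (hε : 0 < ε) :
    ∀ x ∈ Icc a b, m x ≤ -1 - 2 * j * (x - a) + ε * exp ((2 * C + 1) * (x - a)) := by
  set K := 2 * C + 1
  have hB : ∀ t, HasDerivAt (fun s => -1 - 2 * j * (s - a) + ε * exp (K * (s - a)))
      (-2 * j + K * (ε * exp (K * (t - a)))) t := by
    intro t
    have hlin : HasDerivAt (fun s => s - a) 1 t := (hasDerivAt_id t).sub_const a
    exact (((hlin.const_mul (2 * j)).const_sub (-1)).add
      (((hlin.const_mul K).exp).const_mul ε)).congr_deriv (by ring)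
  have hstart : m a ≤ -1 - 2 * j * (a - a) + ε * exp (K * (a - a)) := by
    simp only [sub_self, mul_zero, exp_zero, mul_one]
    linarith
  refine image_le_of_deriv_right_lt_deriv_boundary hm hm' hstart hB fun t ht hmt => ?_
  obtain ⟨hc₀, hcC⟩ := hc t ht
  have hδ : 0 < ε * exp (K * (t - a)) := by positivity
  have hu : 1 + m t ≤ ε * exp (K * (t - a)) := by
    linarith [mul_nonneg hj (sub_nonneg.2 ht.1)]
  linarith [mul_one_sub_sq_lt hc₀ hcC hδ hu]

lemma le_neg_one_sub_of_riccati (hj : 0 ≤ j) (hc : ∀ t ∈ Ico a b, c t ∈ Icc 0 C)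
    (hm : ContinuousOn m (Icc a b))
    (hm' : ∀ t ∈ Ico a b, HasDerivWithinAt m (-2 * j + c t * (1 - m t ^ 2)) (Ici t) t)
    (ha : m a ≤ -1) : ∀ x ∈ Icc a b, m x ≤ -1 - 2 * j * (x - a) := by
  intro x hx
  refine le_of_forall_pos_le_add fun δ hδ => ?_
  set E := exp ((2 * C + 1) * (x - a))
  have hε : 0 < δ / E := by positivity
  have := le_neg_one_sub_add_exp_of_riccati hj hc hm hm' ha hε x hx
  rwa [div_mul_cancel₀ δ (exp_pos _).ne'] at this

end Riccati

theorem ivp_absorbing_general (β lam ℓ : ℝ) (hβ : 0 < β) (hlam : 0 < lam)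
    (j : ℝ) (hj : 0 < j) (m : ℝ → ℝ) (hm : IsIVPSolution β lam ℓ j m)
    (y : ℝ) (hy : y ∈ Icc (0 : ℝ) ℓ) (hmy : m y ≤ -1) :
    ∀ x ∈ Icc y ℓ, m x ≤ -1 - 2 * j * (x - y) := by
  have hderiv : ∀ t ∈ Icc y ℓ,
      HasDerivAt m (-2 * j + β * lam * gfun ℓ t * (1 - m t ^ 2)) t := fun t ht => by
    convert hm.2 t ⟨hy.1.trans ht.1, ht.2⟩ using 1
    ring
  refine le_neg_one_sub_of_riccati (C := β * lam) hj.le (fun t _ => ⟨?_, ?_⟩)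
    (fun t ht => (hderiv t ht).continuousAt.continuousWithinAt)
    (fun t ht => (hderiv t (Ico_subset_Icc_self ht)).hasDerivWithinAt) hmy
  · exact mul_nonneg (by positivity) (gfun_nonneg ℓ t)
  · exact mul_le_of_le_one_right (by positivity) (gfun_le_one ℓ t)

/-- Absorbing-set estimate from the proof of Lemma A.1. -/
theorem ivp_absorbing (β lam ℓ : ℝ) (hβ : 0 < β) (hlam : 0 < lam) (hℓ : 2 < ℓ)
    (j : ℝ) (hj : 0 < j) (m : ℝ → ℝ) (hm : IsIVPSolution β lam ℓ j m)
    (y : ℝ) (hy : y ∈ Icc (0 : ℝ) ℓ) (hmy : m y ≤ -1) :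
    ∀ x ∈ Icc y ℓ, m x ≤ -1 - 2 * j * (x - y) :=
  ivp_absorbing_general β lam ℓ hβ hlam j hj m hm y hy hmy
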